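/- arXiv:1510.03014 — 2 statements merged into one kernel-verified Lean document; each statement's English description precedes it below -/
import Mathlib

section
/- Let (F_n) be a norm bounded sequence in ba(𝒜)₊ that is asymptotically orthogonal, i.e. lim_n ‖F_n ∧ F_j‖ = 0 for every fixed j. Then for every finitely additive probability λ on 𝒜, sup_k limsup_n ‖F_n ∧ 2^k λ‖ = 0. -/
noncomputable section
open Filter Set

variable {Ω : Type}

/-- `C` is an algebra of subsets of `Ω`. -/
def IsSetAlg (C : Set (Set Ω)) : Prop :=
  ∅ ∈ C ∧ (∀ A ∈ C, Aᶜ ∈ C) ∧ ∀ A ∈ C, ∀ B ∈ C, A ∪ B ∈ C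

/-- `μ` is finitely additive on the algebra `C`. -/
def IsFinAdd (C : Set (Set Ω)) (μ : Set Ω → ℝ) : Prop :=
  μ ∅ = 0 ∧ ∀ A ∈ C, ∀ B ∈ C, Disjoint A B → μ (A ∪ B) = μ A + μ B

/-- `π` is a partition of `A` into finitely many members of `C`. -/
def IsPartition (C : Set (Set Ω)) (π : Finset (Set Ω)) (A : Set Ω) : Prop :=
  (∀ E ∈ π, E ∈ C) ∧ (π : Set (Set Ω)).PairwiseDisjoint id ∧
    ⋃₀ (π : Set (Set Ω)) = A

/-- The set of partial variation sums of `μ` over finite `C`-partitions of `A`. -/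
def varSums (C : Set (Set Ω)) (μ : Set Ω → ℝ) (A : Set Ω) : Set ℝ :=
  {x | ∃ π : Finset (Set Ω), IsPartition C π A ∧ x = ∑ E ∈ π, |μ E|}

/-- The total variation `|μ|(A)`. -/
def totalVar (C : Set (Set Ω)) (μ : Set Ω → ℝ) (A : Set Ω) : ℝ :=
  sSup (varSums C μ A)

/-- The total variation norm `‖μ‖ = |μ|(Ω)`. -/
def tvNorm (C : Set (Set Ω)) (μ : Set Ω → ℝ) : ℝ :=
  totalVar C μ univ

/-- `μ` has bounded total variation. -/
def BddVar (C : Set (Set Ω)) (μ : Set Ω → ℝ) : Prop :=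
  BddAbove (varSums C μ univ)

/-- `μ ∈ ba(C)`: finitely additive with bounded total variation. -/
def Memba (C : Set (Set Ω)) (μ : Set Ω → ℝ) : Prop :=
  IsFinAdd C μ ∧ BddVar C μ

/-- The lattice infimum `μ ∧ ν` in `ba(C)`. -/
def baInf (C : Set (Set Ω)) (μ ν : Set Ω → ℝ) (A : Set Ω) : ℝ :=
  sInf {x | ∃ B ∈ C, x = μ (A ∩ B) + ν (A ∩ Bᶜ)}

/-- `l` is a finitely additive probability on `C`. -/
def IsFAProb (C : Set (Set Ω)) (l : Set Ω → ℝ) : Prop :=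
  Memba C l ∧ (∀ A ∈ C, 0 ≤ l A) ∧ l univ = 1

/-- `ξ ≪ l` : (ε-δ) absolute continuity. -/
def AbsCont (C : Set (Set Ω)) (ξ l : Set Ω → ℝ) : Prop :=
  ∀ ε > (0:ℝ), ∃ δ > (0:ℝ), ∀ A ∈ C, l A < δ → totalVar C ξ A < ε

/-- The tail sets `{F n, F (n+1), ...}` of a sequence of set functions. -/
def tailSet (F : ℕ → Set Ω → ℝ) (n : ℕ) : Set (Set Ω → ℝ) :=
  {g | ∃ i, n ≤ i ∧ g = F i}

/-!
For `μ, ν ≥ 0` the infimum `μ ∧ ν` is again a nonnegative finitely additive set function, so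
`‖μ ∧ ν‖ = (μ ∧ ν)(Ω)`. Fix `ν = 2^k λ` and suppose `g n = (F n ∧ ν)(Ω)` has `limsup g = L > 0`.
Asymptotic orthogonality lets us pick `m` indices with `g > L/2` at each of them and
`(F p ∧ F q)(Ω) < δ` for each pair. A near-optimal witness `B` for `F p ∧ F q` separates the two
measures; intersecting these witnesses gives pairwise disjoint sets `C_p` with
`F p (C_pᶜ) ≤ 2(m-1)δ`, hence `∑ₚ (F p ∧ ν)(Ω) ≤ ∑ₚ (F p (C_pᶜ) + ν(C_p)) ≤ ν(Ω) + 2m(m-1)δ`,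
which contradicts `∑ₚ g p > mL/2` once `m` is large and `δ` small.
-/

open MeasureTheory Filter Set Topology
open scoped NNReal

variable {C : Set (Set Ω)} {μ ν : Set Ω → ℝ} {A B : Set Ω}

theorem IsSetAlg.isSetAlgebra (hC : IsSetAlg C) : IsSetAlgebra C :=
  ⟨hC.1, fun A hA => hC.2.1 A hA, fun A B hA hB => hC.2.2 A hA B hB⟩

namespace IsFinAdd

/-- Monotonicity and subadditivity are inherited from Mathlib's additive contents, which need a
canonically ordered codomain. -/
def toNNContent (hC : IsSetAlgebra C) (hμ : IsFinAdd C μ) (hμ0 : ∀ A ∈ C, 0 ≤ μ A) :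
    AddContent ℝ≥0 C :=
  hC.isSetRing.addContent_of_union (fun A => (μ A).toNNReal) (by simp [hμ.1])
    fun hA hB hAB => by rw [hμ.2 _ hA _ hB hAB, Real.toNNReal_add (hμ0 _ hA) (hμ0 _ hB)]

theorem toNNContent_apply (hC : IsSetAlgebra C) (hμ : IsFinAdd C μ) (hμ0 : ∀ A ∈ C, 0 ≤ μ A)
    (hA : A ∈ C) : (hμ.toNNContent hC hμ0 A : ℝ) = μ A :=
  Real.coe_toNNReal _ (hμ0 A hA)

theorem union_le (hC : IsSetAlgebra C) (hμ : IsFinAdd C μ) (hμ0 : ∀ A ∈ C, 0 ≤ μ A)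
    (hA : A ∈ C) (hB : B ∈ C) : μ (A ∪ B) ≤ μ A + μ B := by
  rw [← hμ.toNNContent_apply hC hμ0 hA, ← hμ.toNNContent_apply hC hμ0 hB,
    ← hμ.toNNContent_apply hC hμ0 (hC.union_mem hA hB)]
  exact_mod_cast addContent_union_le hC.isSetRing hA hB

theorem biUnion_le {ι : Type*} (hC : IsSetAlgebra C) (hμ : IsFinAdd C μ)
    (hμ0 : ∀ A ∈ C, 0 ≤ μ A) (S : Finset ι) {s : ι → Set Ω} (hs : ∀ i ∈ S, s i ∈ C) :
    μ (⋃ i ∈ S, s i) ≤ ∑ i ∈ S, μ (s i) := by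
  rw [← hμ.toNNContent_apply hC hμ0 (hC.biUnion_mem S hs),
    ← Finset.sum_congr rfl fun i hi => hμ.toNNContent_apply hC hμ0 (hs i hi)]
  exact_mod_cast addContent_biUnion_le hC.isSetRing hs

theorem sum_le_apply_univ {ι : Type*} (hC : IsSetAlgebra C) (hμ : IsFinAdd C μ)
    (hμ0 : ∀ A ∈ C, 0 ≤ μ A) {S : Finset ι} {s : ι → Set Ω} (hs : ∀ i ∈ S, s i ∈ C)
    (hS : (S : Set ι).PairwiseDisjoint s) : ∑ i ∈ S, μ (s i) ≤ μ univ := by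
  rw [← Finset.sum_congr rfl fun i hi => hμ.toNNContent_apply hC hμ0 (hs i hi),
    ← hμ.toNNContent_apply hC hμ0 hC.univ_mem]
  have h := addContent_biUnion_eq (m := hμ.toNNContent hC hμ0) hC.isSetRing hs hS
  exact_mod_cast h ▸ addContent_mono hC.isSetRing.isSetSemiring (hC.biUnion_mem S hs)
    hC.univ_mem (subset_univ _)

theorem sum_eq_of_isPartition (hC : IsSetAlgebra C) (hμ : IsFinAdd C μ)
    (hμ0 : ∀ A ∈ C, 0 ≤ μ A) {π : Finset (Set Ω)} (hπ : IsPartition C π A) :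
    ∑ E ∈ π, μ E = μ A := by
  obtain ⟨hmem, hdisj, rfl⟩ := hπ
  have hU : ⋃₀ (π : Set (Set Ω)) ∈ C := by
    rw [sUnion_eq_biUnion]; exact hC.biUnion_mem π hmem
  rw [← Finset.sum_congr rfl fun E hE => hμ.toNNContent_apply hC hμ0 (hmem E hE),
    ← hμ.toNNContent_apply hC hμ0 hU, addContent_sUnion hmem hdisj hU]
  push_cast; rfl

theorem tvNorm_eq (hC : IsSetAlgebra C) (hμ : IsFinAdd C μ) (hμ0 : ∀ A ∈ C, 0 ≤ μ A) :
    tvNorm C μ = μ univ := by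
  have hsums : varSums C μ univ = {μ univ} := by
    refine Set.eq_singleton_iff_unique_mem.2 ⟨⟨{univ}, ⟨by simpa using hC.univ_mem, by simp,
      by simp⟩, by simp [abs_of_nonneg (hμ0 _ hC.univ_mem)]⟩, ?_⟩
    rintro _ ⟨π, hπ, rfl⟩
    rw [Finset.sum_congr rfl fun E hE => abs_of_nonneg (hμ0 E (hπ.1 E hE))]
    exact hμ.sum_eq_of_isPartition hC hμ0 hπ
  rw [tvNorm, totalVar, hsums, csSup_singleton]

end IsFinAdd

section baInf

variable {r : ℝ}

theorem baInf_le (hC : IsSetAlgebra C) (hμ0 : ∀ A ∈ C, 0 ≤ μ A) (hν0 : ∀ A ∈ C, 0 ≤ ν A)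
    (hA : A ∈ C) (hB : B ∈ C) : baInf C μ ν A ≤ μ (A ∩ B) + ν (A ∩ Bᶜ) := by
  unfold baInf
  refine csInf_le ⟨0, ?_⟩ ⟨B, hB, rfl⟩
  rintro _ ⟨B', hB', rfl⟩
  exact add_nonneg (hμ0 _ (hC.inter_mem hA hB')) (hν0 _ (hC.inter_mem hA (hC.compl_mem hB')))

theorem le_baInf (hC : IsSetAlgebra C) (h : ∀ B ∈ C, r ≤ μ (A ∩ B) + ν (A ∩ Bᶜ)) :
    r ≤ baInf C μ ν A := by
  refine le_csInf ⟨_, ∅, hC.empty_mem, rfl⟩ ?_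
  rintro _ ⟨B, hB, rfl⟩
  exact h B hB

theorem exists_lt_of_baInf_lt (hC : IsSetAlgebra C) (h : baInf C μ ν A < r) :
    ∃ B ∈ C, μ (A ∩ B) + ν (A ∩ Bᶜ) < r := by
  obtain ⟨_, ⟨B, hB, rfl⟩, hlt⟩ :=
    exists_lt_of_csInf_lt (s := {x | ∃ B ∈ C, x = μ (A ∩ B) + ν (A ∩ Bᶜ)})
      ⟨_, ∅, hC.empty_mem, rfl⟩ h
  exact ⟨B, hB, hlt⟩

theorem baInf_nonneg (hC : IsSetAlgebra C) (hμ0 : ∀ A ∈ C, 0 ≤ μ A) (hν0 : ∀ A ∈ C, 0 ≤ ν A)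
    (hA : A ∈ C) : 0 ≤ baInf C μ ν A :=
  le_baInf hC fun _ hB =>
    add_nonneg (hμ0 _ (hC.inter_mem hA hB)) (hν0 _ (hC.inter_mem hA (hC.compl_mem hB)))

theorem baInf_le_right (hC : IsSetAlgebra C) (hμ : IsFinAdd C μ) (hμ0 : ∀ A ∈ C, 0 ≤ μ A)
    (hν0 : ∀ A ∈ C, 0 ≤ ν A) (hA : A ∈ C) : baInf C μ ν A ≤ ν A := by
  simpa [hμ.1] using baInf_le hC hμ0 hν0 hA hC.empty_mem

theorem baInf_comm (hC : IsSetAlgebra C) : baInf C μ ν = baInf C ν μ := by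
  ext A
  unfold baInf
  congr 1
  ext x
  constructor <;> rintro ⟨B, hB, rfl⟩ <;> exact ⟨Bᶜ, hC.compl_mem hB, by rw [compl_compl, add_comm]⟩

theorem IsFinAdd.union_inter (hC : IsSetAlgebra C) (hμ : IsFinAdd C μ) {A₁ A₂ : Set Ω}
    (h₁ : A₁ ∈ C) (h₂ : A₂ ∈ C) (hd : Disjoint A₁ A₂) (hB : B ∈ C) :
    μ ((A₁ ∪ A₂) ∩ B) = μ (A₁ ∩ B) + μ (A₂ ∩ B) := by
  rw [union_inter_distrib_right]
  exact hμ.2 _ (hC.inter_mem h₁ hB) _ (hC.inter_mem h₂ hB)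
    (hd.mono inter_subset_left inter_subset_left)

theorem baInf_union (hC : IsSetAlgebra C) (hμ : IsFinAdd C μ) (hμ0 : ∀ A ∈ C, 0 ≤ μ A)
    (hν : IsFinAdd C ν) (hν0 : ∀ A ∈ C, 0 ≤ ν A) {A₁ A₂ : Set Ω} (h₁ : A₁ ∈ C) (h₂ : A₂ ∈ C)
    (hd : Disjoint A₁ A₂) : baInf C μ ν (A₁ ∪ A₂) = baInf C μ ν A₁ + baInf C μ ν A₂ := by
  refine le_antisymm (le_of_forall_pos_lt_add fun ε hε => ?_) (le_baInf hC fun _ hB => ?_)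
  · obtain ⟨B₁, hB₁, hlt₁⟩ :=
      exists_lt_of_baInf_lt hC (lt_add_of_pos_right (baInf C μ ν A₁) (half_pos hε))
    obtain ⟨B₂, hB₂, hlt₂⟩ :=
      exists_lt_of_baInf_lt hC (lt_add_of_pos_right (baInf C μ ν A₂) (half_pos hε))
    set B := A₁ ∩ B₁ ∪ A₂ ∩ B₂
    have hB : B ∈ C := hC.union_mem (hC.inter_mem h₁ hB₁) (hC.inter_mem h₂ hB₂)
    have e₁ : A₁ ∩ B = A₁ ∩ B₁ := by ext x; grind
    have e₂ : A₂ ∩ B = A₂ ∩ B₂ := by ext x; grind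
    have e₁' : A₁ ∩ Bᶜ = A₁ ∩ B₁ᶜ := by ext x; grind
    have e₂' : A₂ ∩ Bᶜ = A₂ ∩ B₂ᶜ := by ext x; grind
    have := baInf_le hC hμ0 hν0 (hC.union_mem h₁ h₂) hB
    rw [hμ.union_inter hC h₁ h₂ hd hB, hν.union_inter hC h₁ h₂ hd (hC.compl_mem hB),
      e₁, e₂, e₁', e₂'] at this
    linarith
  · rw [hμ.union_inter hC h₁ h₂ hd hB, hν.union_inter hC h₁ h₂ hd (hC.compl_mem hB)]
    linarith [baInf_le hC hμ0 hν0 h₁ hB, baInf_le hC hμ0 hν0 h₂ hB]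

theorem IsFinAdd.baInf (hC : IsSetAlgebra C) (hμ : IsFinAdd C μ) (hμ0 : ∀ A ∈ C, 0 ≤ μ A)
    (hν : IsFinAdd C ν) (hν0 : ∀ A ∈ C, 0 ≤ ν A) : IsFinAdd C (baInf C μ ν) :=
  ⟨le_antisymm (hν.1 ▸ baInf_le_right hC hμ hμ0 hν0 hC.empty_mem)
      (baInf_nonneg hC hμ0 hν0 hC.empty_mem),
    fun _ hA _ hB hd => baInf_union hC hμ hμ0 hν hν0 hA hB hd⟩

theorem tvNorm_baInf (hC : IsSetAlgebra C) (hμ : IsFinAdd C μ) (hμ0 : ∀ A ∈ C, 0 ≤ μ A)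
    (hν : IsFinAdd C ν) (hν0 : ∀ A ∈ C, 0 ≤ ν A) :
    tvNorm C (baInf C μ ν) = baInf C μ ν univ :=
  (hμ.baInf hC hμ0 hν hν0).tvNorm_eq hC fun _ hA => baInf_nonneg hC hμ0 hν0 hA

end baInf

section Separation

variable {ι : Type*} [DecidableEq ι]

/-- When `f i` is small on `B i j` and `f j` is small off it, `separator B s i` is where `f i`
lives away from every other `f j`, `j ∈ s`. -/
def separator (B : ι → ι → Set Ω) (s : Finset ι) (i : ι) : Set Ω :=
  ⋂ j ∈ s.erase i, B j i \ B i j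

theorem pairwiseDisjoint_separator (B : ι → ι → Set Ω) (s : Finset ι) :
    (s : Set ι).PairwiseDisjoint (separator B s) := by
  intro i hi j hj hij
  have hi' : separator B s i ⊆ B j i :=
    (biInter_subset_of_mem (Finset.mem_erase.2 ⟨Ne.symm hij, hj⟩)).trans sdiff_subset
  have hj' : separator B s j ⊆ (B j i)ᶜ := fun x hx =>
    (mem_iInter₂.1 hx i (Finset.mem_erase.2 ⟨hij, hi⟩)).2
  exact disjoint_compl_right.mono hi' hj'

theorem separator_mem (hC : IsSetAlgebra C) {B : ι → ι → Set Ω} (hB : ∀ i j, B i j ∈ C)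
    (s : Finset ι) (i : ι) : separator B s i ∈ C :=
  hC.biInter_mem _ fun j _ => hC.sdiff_mem (hB j i) (hB i j)

theorem IsFinAdd.apply_compl_separator_le (hC : IsSetAlgebra C) (hμ : IsFinAdd C μ)
    (hμ0 : ∀ A ∈ C, 0 ≤ μ A) {B : ι → ι → Set Ω} (hB : ∀ i j, B i j ∈ C) (s : Finset ι)
    (i : ι) : μ (separator B s i)ᶜ ≤ ∑ j ∈ s.erase i, (μ (B i j) + μ (B j i)ᶜ) := by
  rw [separator, compl_iInter₂]
  refine (hμ.biUnion_le hC hμ0 _ fun j _ => hC.compl_mem (hC.sdiff_mem (hB j i) (hB i j))).trans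
    (Finset.sum_le_sum fun j _ => ?_)
  rw [compl_sdiff]
  exact hμ.union_le hC hμ0 (hB i j) (hC.compl_mem (hB j i))

end Separation

theorem sum_baInf_le {ι : Type*} (hC : IsSetAlgebra C) (s : Finset ι) {f : ι → Set Ω → ℝ}
    (hf : ∀ i, IsFinAdd C (f i)) (hf0 : ∀ i, ∀ A ∈ C, 0 ≤ f i A) (hν : IsFinAdd C ν)
    (hν0 : ∀ A ∈ C, 0 ≤ ν A) {δ : ℝ}
    (hsmall : ∀ i ∈ s, ∀ j ∈ s, i ≠ j → baInf C (f i) (f j) univ < δ) :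
    ∑ i ∈ s, baInf C (f i) ν univ ≤ ν univ + 2 * s.card * (s.card - 1) * δ := by
  classical
  have hsep : ∀ i j, ∃ B ∈ C, i ∈ s → j ∈ s → i ≠ j → f i B + f j Bᶜ < δ := by
    intro i j
    by_cases h : i ∈ s ∧ j ∈ s ∧ i ≠ j
    · obtain ⟨B, hB, hlt⟩ := exists_lt_of_baInf_lt hC (hsmall i h.1 j h.2.1 h.2.2)
      exact ⟨B, hB, fun _ _ _ => by simpa using hlt⟩
    · exact ⟨∅, hC.empty_mem, fun hi hj hij => (h ⟨hi, hj, hij⟩).elim⟩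
  choose B hBC hB using hsep
  have hcompl : ∀ i ∈ s, f i (separator B s i)ᶜ ≤ 2 * (s.card - 1) * δ := by
    intro i hi
    have hterm : ∀ j ∈ s.erase i, f i (B i j) + f i (B j i)ᶜ ≤ 2 * δ := by
      intro j hj
      obtain ⟨hji, hj⟩ := Finset.mem_erase.1 hj
      linarith [hB i j hi hj hji.symm, hB j i hj hi hji, hf0 j _ (hC.compl_mem (hBC i j)),
        hf0 j _ (hBC j i)]
    calc f i (separator B s i)ᶜ ≤ ∑ j ∈ s.erase i, (f i (B i j) + f i (B j i)ᶜ) :=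
          (hf i).apply_compl_separator_le hC (hf0 i) hBC s i
      _ ≤ (s.erase i).card • (2 * δ) := Finset.sum_le_card_nsmul _ _ _ hterm
      _ = 2 * (s.card - 1) * δ := by
          rw [nsmul_eq_mul, Finset.card_erase_of_mem hi,
            Nat.cast_pred (Finset.card_pos.2 ⟨i, hi⟩)]
          ring
  calc ∑ i ∈ s, baInf C (f i) ν univ
      ≤ ∑ i ∈ s, (f i (separator B s i)ᶜ + ν (separator B s i)) :=
        Finset.sum_le_sum fun i _ => by
          simpa using baInf_le hC (hf0 i) hν0 hC.univ_mem
            (hC.compl_mem (separator_mem hC hBC s i))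
    _ = ∑ i ∈ s, f i (separator B s i)ᶜ + ∑ i ∈ s, ν (separator B s i) :=
        Finset.sum_add_distrib
    _ ≤ s.card • (2 * (s.card - 1) * δ) + ν univ :=
        add_le_add (Finset.sum_le_card_nsmul _ _ _ hcompl)
          (hν.sum_le_apply_univ hC hν0 (fun i _ => separator_mem hC hBC s i)
            (pairwiseDisjoint_separator B s))
    _ = ν univ + 2 * s.card * (s.card - 1) * δ := by rw [nsmul_eq_mul]; ring

theorem exists_finset_card_eq_pairwise {P : ℕ → Prop} {R : ℕ → ℕ → Prop}
    (hP : ∃ᶠ n in atTop, P n) (hR : ∀ j, ∀ᶠ n in atTop, R n j ∧ R j n) (m : ℕ) :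
    ∃ s : Finset ℕ, s.card = m ∧ (∀ n ∈ s, P n) ∧ (s : Set ℕ).Pairwise R := by
  induction m with
  | zero => exact ⟨∅, rfl, by simp, by simp⟩
  | succ m ih =>
    obtain ⟨s, hcard, hPs, hRs⟩ := ih
    have hnew : ∀ᶠ n in atTop, n ∉ s ∧ ∀ j ∈ s, R n j ∧ R j n := by
      refine ((s.finite_toSet.eventually_cofinite_notMem).filter_mono
        Nat.cofinite_eq_atTop.ge).and ?_
      exact (eventually_all_finset s).2 fun j _ => hR j
    obtain ⟨n, hn, hns, hnR⟩ := (hP.and_eventually hnew).exists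
    refine ⟨insert n s, by rw [Finset.card_insert_of_notMem hns, hcard], ?_, ?_⟩
    · exact Finset.forall_mem_insert _ _ _ |>.2 ⟨hn, hPs⟩
    · rw [Finset.coe_insert, pairwise_insert]
      exact ⟨hRs, fun j hj _ => hnR j hj⟩

theorem limsup_baInf_eq_zero (hC : IsSetAlgebra C) {F : ℕ → Set Ω → ℝ}
    (hF : ∀ n, IsFinAdd C (F n)) (hF0 : ∀ n, ∀ A ∈ C, 0 ≤ F n A)
    (horth : ∀ j, Tendsto (fun n => baInf C (F n) (F j) univ) atTop (𝓝 0))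
    (hν : IsFinAdd C ν) (hν0 : ∀ A ∈ C, 0 ≤ ν A) :
    limsup (fun n => baInf C (F n) ν univ) atTop = 0 := by
  set g := fun n => baInf C (F n) ν univ
  have hg0 : ∀ n, 0 ≤ g n := fun n => baInf_nonneg hC (hF0 n) hν0 hC.univ_mem
  have hgν : ∀ n, g n ≤ ν univ := fun n => baInf_le_right hC (hF n) (hF0 n) hν0 hC.univ_mem
  have hbdd : IsBoundedUnder (· ≤ ·) atTop g := isBoundedUnder_of ⟨_, hgν⟩
  refine le_antisymm (not_lt.1 fun hL => ?_) (le_limsup_of_frequently_le (.of_forall hg0) hbdd)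
  set L := limsup g atTop
  obtain ⟨m, hm⟩ := exists_nat_gt (2 * (ν univ + 1) / L)
  have hmL : ν univ + 1 < m * (L / 2) := by
    rw [div_lt_iff₀ hL] at hm; linarith
  have hm0 : (0 : ℝ) < m := by nlinarith [hgν 0, hg0 0]
  set δ : ℝ := 1 / (2 * m ^ 2)
  have hδ : 0 < δ := by positivity
  have hfreq : ∃ᶠ n in atTop, L / 2 < g n :=
    frequently_lt_of_lt_limsup (isBoundedUnder_of ⟨0, hg0⟩).isCoboundedUnder_le (by linarith)
  have hsmall : ∀ j, ∀ᶠ n in atTop,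
      baInf C (F n) (F j) univ < δ ∧ baInf C (F j) (F n) univ < δ := fun j =>
    ((horth j).eventually (gt_mem_nhds hδ)).mono fun n h => ⟨h, baInf_comm hC (μ := F n) ▸ h⟩
  obtain ⟨s, hcard, hsg, hsR⟩ := exists_finset_card_eq_pairwise hfreq hsmall m
  have hupper := sum_baInf_le hC s hF hF0 hν hν0 fun i hi j hj hij => hsR hi hj hij
  have hlower : m * (L / 2) < ∑ i ∈ s, g i := by
    have hs : s.Nonempty := Finset.card_pos.1 (by exact_mod_cast hcard ▸ hm0)
    simpa [hcard] using Finset.sum_lt_sum_of_nonempty hs hsg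
  have hδm : 2 * (m : ℝ) * (m - 1) * δ ≤ 1 := by
    rw [show δ = 1 / (2 * m ^ 2) from rfl, mul_one_div, div_le_one (by positivity)]
    nlinarith
  rw [hcard] at hupper
  linarith

theorem IsFinAdd.const_mul (hμ : IsFinAdd C μ) (c : ℝ) : IsFinAdd C fun A => c * μ A :=
  ⟨by simp [hμ.1], fun A hA B hB hd => by simp only [hμ.2 A hA B hB hd, mul_add]⟩

theorem asympOrth_sup_limsup_zero_general {Ω : Type} (C : Set (Set Ω)) (hC : IsSetAlg C)
    (F : ℕ → Set Ω → ℝ) (hF : ∀ n, Memba C (F n))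
    (hFpos : ∀ n, ∀ A ∈ C, 0 ≤ F n A)
    (horth : ∀ j, Tendsto (fun n => tvNorm C (baInf C (F n) (F j))) atTop (nhds 0)) :
    ∀ l : Set Ω → ℝ, IsFAProb C l →
      (⨆ k : ℕ, Filter.limsup
        (fun n => tvNorm C (baInf C (F n) (fun B => (2:ℝ) ^ k * l B))) atTop) = 0 := by
  rintro l ⟨⟨hl, -⟩, hl0, -⟩
  have hC := hC.isSetAlgebra
  have hFa : ∀ n, IsFinAdd C (F n) := fun n => (hF n).1
  have hnorm : ∀ n {ν}, IsFinAdd C ν → (∀ A ∈ C, 0 ≤ ν A) →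
      tvNorm C (baInf C (F n) ν) = baInf C (F n) ν univ :=
    fun n _ hν hν0 => tvNorm_baInf hC (hFa n) (hFpos n) hν hν0
  have horth_univ := fun j => (horth j).congr fun n => hnorm n (hFa j) (hFpos j)
  suffices ∀ k : ℕ, limsup
      (fun n => tvNorm C (baInf C (F n) fun B => (2:ℝ) ^ k * l B)) atTop = 0 by
    simp [this]
  intro k
  have hν0 : ∀ A ∈ C, 0 ≤ (2:ℝ) ^ k * l A := fun A hA => mul_nonneg (by positivity) (hl0 A hA)
  simp only [hnorm _ (hl.const_mul _) hν0]
  exact limsup_baInf_eq_zero hC hFa hFpos horth_univ (hl.const_mul _) hν0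

/-- If the norm bounded sequence `(F n)` in `ba(C)₊` is asymptotically
orthogonal (`‖F n ∧ F j‖ → 0` for each fixed `j`), then for every finitely additive
probability `l` on `C`, `sup_k limsup_n ‖F n ∧ 2^k l‖ = 0`. -/
theorem asympOrth_sup_limsup_zero {Ω : Type} (C : Set (Set Ω)) (hC : IsSetAlg C)
    (F : ℕ → Set Ω → ℝ) (hF : ∀ n, Memba C (F n))
    (hFpos : ∀ n, ∀ A ∈ C, 0 ≤ F n A)
    (hbdd : ∃ M : ℝ, ∀ n, tvNorm C (F n) ≤ M)
    (horth : ∀ j, Tendsto (fun n => tvNorm C (baInf C (F n) (F j))) atTop (nhds 0)) :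
    ∀ l : Set Ω → ℝ, IsFAProb C l →
      (⨆ k : ℕ, Filter.limsup
        (fun n => tvNorm C (baInf C (F n) (fun B => (2:ℝ) ^ k * l B))) atTop) = 0 :=
  asympOrth_sup_limsup_zero_general C hC F hF hFpos horth
end
end

section
/- Let λ be a countably additive probability measure on a σ-algebra, (f_n) a bounded sequence in L¹(λ), and suppose there exist g_n in the convex hull of {f_n, f_{n+1}, ...}, sets A_n with Σ_n λ(A_nᶜ) < ∞, and ξ ∈ ba absolutely continuous w.r.t. λ such that the measures B ↦ ∫_{A_n ∩ B} g_n dλ converge in total variation to ξ. Then (g_n) is Cauchy in measure: for every c > 0, λ(|g_n − g_m| > c) → 0 as n, m → ∞. -/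
/-!
Let `t n` be the total-variation distance between `B ↦ ∫_{A n ∩ B} g n` and `ξ`. For measurable
`D ⊆ A n ∩ A m` both `∫_D g n` and `∫_D g m` are within `t n`, `t m` of `ξ D`, so
`∫_D (g n - g m) ≤ t n + t m`. Applied to `D = A n ∩ A m ∩ {c < ±(g n - g m)}` this is a Markov
inequality, whence `λ(|g n - g m| > c) ≤ λ((A n)ᶜ) + λ((A m)ᶜ) + 2 (t n + t m) / c → 0`.
-/

noncomputable section
open Filter Set

variable {Ω : Type}

open MeasureTheory

section TotalVariation

variable {C : Set (Set Ω)}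

lemma abs_le_tvNorm {ν : Set Ω → ℝ} (hν : BddVar C ν) {B : Set Ω} (hB : B ∈ C)
    (hBc : Bᶜ ∈ C) : |ν B| ≤ tvNorm C ν := by
  classical
  have hπ : IsPartition C {B, Bᶜ} univ := by
    refine ⟨?_, ?_, by simp⟩
    · simp only [Finset.mem_insert, Finset.mem_singleton]
      rintro E (rfl | rfl) <;> assumption
    · rw [Finset.coe_pair]
      exact (pairwiseDisjoint_singleton _ _).insert fun _ h _ =>
        (mem_singleton_iff.mp h ▸ disjoint_compl_right)
  calc |ν B| ≤ ∑ E ∈ {B, Bᶜ}, |ν E| :=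
        Finset.single_le_sum (f := fun E => |ν E|) (fun _ _ => abs_nonneg _)
          (Finset.mem_insert_self _ _)
    _ ≤ tvNorm C ν := le_csSup hν ⟨_, hπ, rfl⟩

lemma BddVar.sub {μ ν : Set Ω → ℝ} (hμ : BddVar C μ) (hν : BddVar C ν) :
    BddVar C (fun B => μ B - ν B) := by
  refine ⟨tvNorm C μ + tvNorm C ν, ?_⟩
  rintro _ ⟨π, hπ, rfl⟩
  calc ∑ E ∈ π, |μ E - ν E| ≤ ∑ E ∈ π, (|μ E| + |ν E|) :=
        Finset.sum_le_sum fun E _ => abs_sub _ _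
    _ = ∑ E ∈ π, |μ E| + ∑ E ∈ π, |ν E| := Finset.sum_add_distrib
    _ ≤ tvNorm C μ + tvNorm C ν :=
        add_le_add (le_csSup hμ ⟨π, hπ, rfl⟩) (le_csSup hν ⟨π, hπ, rfl⟩)

end TotalVariation

lemma integrable_of_mem_convexHull {α E : Type*} [MeasurableSpace α] [NormedAddCommGroup E]
    [NormedSpace ℝ E] {μ : Measure α} {s : Set (α → E)} (hs : ∀ f ∈ s, Integrable f μ)
    {g : α → E} (hg : g ∈ convexHull ℝ s) : Integrable g μ :=
  convexHull_min (t := {f | Integrable f μ}) hs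
    (fun _ (hu : Integrable _ μ) _ (hv : Integrable _ μ) a b _ _ _ =>
      show Integrable _ μ from (hu.smul a).add (hv.smul b)) hg

section Measure

variable [MeasurableSpace Ω] {μ : Measure Ω}

lemma bddVar_setIntegral {g : Ω → ℝ} (hg : Integrable g μ) {S : Set Ω} (hS : MeasurableSet S) :
    BddVar {B | MeasurableSet B} (fun B => ∫ x in S ∩ B, g x ∂μ) := by
  refine ⟨∫ x, |g x| ∂μ, ?_⟩
  rintro _ ⟨π, ⟨hπC, hπdisj, -⟩, rfl⟩
  calc ∑ E ∈ π, |∫ x in S ∩ E, g x ∂μ| ≤ ∑ E ∈ π, ∫ x in S ∩ E, |g x| ∂μ :=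
        Finset.sum_le_sum fun E _ => abs_integral_le_integral_abs
    _ = ∫ x in ⋃ E ∈ π, S ∩ E, |g x| ∂μ :=
        (integral_biUnion_finset π (fun E hE => hS.inter (hπC E hE))
          (fun _ hE _ hF hEF => (hπdisj hE hF hEF).mono inter_subset_right inter_subset_right)
          fun _ _ => hg.abs.integrableOn).symm
    _ ≤ ∫ x, |g x| ∂μ := setIntegral_le_integral hg.abs (.of_forall fun _ => abs_nonneg _)

lemma setIntegral_sub_le_of_abs_sub_le {u v : Ω → ℝ} (hu : Integrable u μ) (hv : Integrable v μ)
    {A A' : Set Ω} {ξ : Set Ω → ℝ} {s s' : ℝ}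
    (hs : ∀ B, MeasurableSet B → |(∫ x in A ∩ B, u x ∂μ) - ξ B| ≤ s)
    (hs' : ∀ B, MeasurableSet B → |(∫ x in A' ∩ B, v x ∂μ) - ξ B| ≤ s')
    {D : Set Ω} (hD : MeasurableSet D) (hDA : D ⊆ A) (hDA' : D ⊆ A') :
    ∫ x in D, (u x - v x) ∂μ ≤ s + s' := by
  have hu' := hs D hD
  have hv' := hs' D hD
  rw [inter_eq_self_of_subset_right hDA] at hu'
  rw [inter_eq_self_of_subset_right hDA'] at hv'
  rw [integral_sub hu.integrableOn hv.integrableOn]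
  linarith [(abs_le.mp hu').2, (abs_le.mp hv').1]

lemma measureReal_inter_lt_le_of_setIntegral_le [IsFiniteMeasure μ] {φ : Ω → ℝ}
    (hφ : Integrable φ μ) {S : Set Ω} (hS : MeasurableSet S) {K c : ℝ} (hc : 0 < c)
    (hK : ∀ D, MeasurableSet D → D ⊆ S → ∫ x in D, φ x ∂μ ≤ K) :
    μ.real (S ∩ {x | c < φ x}) ≤ K / c := by
  set ψ := hφ.aestronglyMeasurable.mk φ
  have hφψ : φ =ᵐ[μ] ψ := hφ.aestronglyMeasurable.ae_eq_mk
  have hD : MeasurableSet (S ∩ {x | c < ψ x}) :=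
    hS.inter (measurableSet_lt measurable_const
      hφ.aestronglyMeasurable.stronglyMeasurable_mk.measurable)
  have hset : (S ∩ {x | c < φ x} : Set Ω) =ᵐ[μ] (S ∩ {x | c < ψ x} : Set Ω) :=
    eventuallyEq_set.mpr (hφψ.mono fun x hx => by simp [hx])
  rw [measureReal_congr hset, le_div_iff₀ hc, mul_comm]
  calc c * μ.real (S ∩ {x | c < ψ x}) ≤ ∫ x in S ∩ {x | c < ψ x}, ψ x ∂μ :=
        setIntegral_ge_of_const_le_real hD (measure_ne_top _ _) (fun _ hx => hx.2.le)
          (hφ.congr hφψ).integrableOn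
    _ = ∫ x in S ∩ {x | c < ψ x}, φ x ∂μ := integral_congr_ae (ae_restrict_of_ae hφψ.symm)
    _ ≤ K := hK _ hD inter_subset_left

lemma measureReal_lt_abs_sub_le [IsFiniteMeasure μ] {u v : Ω → ℝ} (hu : Integrable u μ)
    (hv : Integrable v μ) {A A' : Set Ω} (hA : MeasurableSet A) (hA' : MeasurableSet A')
    {ξ : Set Ω → ℝ} {s s' : ℝ}
    (hs : ∀ B, MeasurableSet B → |(∫ x in A ∩ B, u x ∂μ) - ξ B| ≤ s)
    (hs' : ∀ B, MeasurableSet B → |(∫ x in A' ∩ B, v x ∂μ) - ξ B| ≤ s') {c : ℝ} (hc : 0 < c) :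
    μ.real {x | c < |u x - v x|} ≤ μ.real Aᶜ + μ.real A'ᶜ + 2 * ((s + s') / c) := by
  have hcover : {x | c < |u x - v x|} ⊆ Aᶜ ∪ A'ᶜ ∪
      (A ∩ A' ∩ {x | c < u x - v x} ∪ A ∩ A' ∩ {x | c < v x - u x}) := by
    intro x (hx : c < |u x - v x|)
    by_cases hxA : x ∈ A
    · by_cases hxA' : x ∈ A'
      · rcases lt_abs.mp hx with h | h
        · exact Or.inr (Or.inl ⟨⟨hxA, hxA'⟩, h⟩)
        · exact Or.inr (Or.inr ⟨⟨hxA, hxA'⟩, by rwa [neg_sub] at h⟩)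
      · exact Or.inl (Or.inr hxA')
    · exact Or.inl (Or.inl hxA)
  have huv := measureReal_inter_lt_le_of_setIntegral_le
    (φ := fun x => u x - v x) (hu.sub hv) (hA.inter hA') hc
    fun D hD hDS => setIntegral_sub_le_of_abs_sub_le hu hv hs hs' hD
      (hDS.trans inter_subset_left) (hDS.trans inter_subset_right)
  have hvu := measureReal_inter_lt_le_of_setIntegral_le
    (φ := fun x => v x - u x) (hv.sub hu) (hA.inter hA') hc
    fun D hD hDS => setIntegral_sub_le_of_abs_sub_le hv hu hs' hs hD
      (hDS.trans inter_subset_right) (hDS.trans inter_subset_left)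
  calc μ.real {x | c < |u x - v x|}
      ≤ μ.real Aᶜ + μ.real A'ᶜ + (μ.real (A ∩ A' ∩ {x | c < u x - v x}) +
          μ.real (A ∩ A' ∩ {x | c < v x - u x})) := by
        grw [measureReal_mono hcover, measureReal_union_le, measureReal_union_le,
          measureReal_union_le]
    _ ≤ μ.real Aᶜ + μ.real A'ᶜ + 2 * ((s + s') / c) := by
        rw [add_comm s' s] at hvu
        linarith

end Measure

theorem cauchy_in_measure_of_komlos_general {Ω : Type} [MeasurableSpace Ω]
    (lam : Measure Ω) [IsProbabilityMeasure lam]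
    (f : ℕ → Ω → ℝ) (hfInt : ∀ n, Integrable (f n) lam)
    (g : ℕ → Ω → ℝ)
    (hg : ∀ n, g n ∈ convexHull ℝ {h : Ω → ℝ | ∃ i, n ≤ i ∧ h = f i})
    (A : ℕ → Set Ω) (hA : ∀ n, MeasurableSet (A n))
    (hAsum : Summable (fun n => (lam (A n)ᶜ).toReal))
    (ξ : Set Ω → ℝ)
    (hξ : Memba {B : Set Ω | MeasurableSet B} ξ)
    (hconv : Tendsto (fun n => tvNorm {B : Set Ω | MeasurableSet B}
        (fun B => (∫ x in A n ∩ B, g n x ∂lam) - ξ B)) atTop (nhds 0)) :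
    ∀ c > (0:ℝ), Tendsto
      (fun p : ℕ × ℕ => (lam {x | c < |g p.1 x - g p.2 x|}).toReal)
      atTop (nhds 0) := by
  intro c hc
  have hgInt : ∀ n, Integrable (g n) lam := fun n =>
    integrable_of_mem_convexHull (by rintro _ ⟨i, -, rfl⟩; exact hfInt i) (hg n)
  set t : ℕ → ℝ := fun n => tvNorm {B : Set Ω | MeasurableSet B}
    (fun B => (∫ x in A n ∩ B, g n x ∂lam) - ξ B)
  have hclose : ∀ n B, MeasurableSet B → |(∫ x in A n ∩ B, g n x ∂lam) - ξ B| ≤ t n :=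
    fun n _ hB => abs_le_tvNorm ((bddVar_setIntegral (hgInt n) (hA n)).sub hξ.2) hB hB.compl
  have hfst : Tendsto (Prod.fst : ℕ × ℕ → ℕ) atTop atTop := by
    rw [← prod_atTop_atTop_eq]; exact tendsto_fst
  have hsnd : Tendsto (Prod.snd : ℕ × ℕ → ℕ) atTop atTop := by
    rw [← prod_atTop_atTop_eq]; exact tendsto_snd
  have hA0 := hAsum.tendsto_atTop_zero
  have hbound := ((hA0.comp hfst).add (hA0.comp hsnd)).add
    ((((hconv.comp hfst).add (hconv.comp hsnd)).div_const c).const_mul 2)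
  simp only [add_zero, mul_zero, zero_div] at hbound
  exact squeeze_zero (fun _ => ENNReal.toReal_nonneg)
    (fun p => measureReal_lt_abs_sub_le (hgInt p.1) (hgInt p.2) (hA p.1) (hA p.2)
      (hclose p.1) (hclose p.2) hc) hbound

/-- If `λ` is a countably additive probability on a σ-algebra, `(f n)` a
bounded sequence in `L¹(λ)`, `g n ∈ co {f n, f (n+1), ...}`, `A n` sets with
`Σ λ((A n)ᶜ) < ∞`, and the measures `B ↦ ∫_{A n ∩ B} g n dλ` converge in total
variation to some `ξ ≪ λ`, then `(g n)` is Cauchy in measure. -/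
theorem cauchy_in_measure_of_komlos {Ω : Type} [MeasurableSpace Ω]
    (lam : Measure Ω) [IsProbabilityMeasure lam]
    (f : ℕ → Ω → ℝ) (hfInt : ∀ n, Integrable (f n) lam)
    (hfBdd : ∃ M : ℝ, ∀ n, ∫ x, |f n x| ∂lam ≤ M)
    (g : ℕ → Ω → ℝ)
    (hg : ∀ n, g n ∈ convexHull ℝ {h : Ω → ℝ | ∃ i, n ≤ i ∧ h = f i})
    (A : ℕ → Set Ω) (hA : ∀ n, MeasurableSet (A n))
    (hAsum : Summable (fun n => (lam (A n)ᶜ).toReal))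
    (ξ : Set Ω → ℝ)
    (hξ : Memba {B : Set Ω | MeasurableSet B} ξ)
    (hξac : AbsCont {B : Set Ω | MeasurableSet B} ξ (fun B => (lam B).toReal))
    (hconv : Tendsto (fun n => tvNorm {B : Set Ω | MeasurableSet B}
        (fun B => (∫ x in A n ∩ B, g n x ∂lam) - ξ B)) atTop (nhds 0)) :
    ∀ c > (0:ℝ), Tendsto
      (fun p : ℕ × ℕ => (lam {x | c < |g p.1 x - g p.2 x|}).toReal)
      atTop (nhds 0) :=
  cauchy_in_measure_of_komlos_general lam f hfInt g hg A hA hAsum ξ hξ hconv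
end
end
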